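/- arXiv:2209.10012 — 7 statements merged into one kernel-verified Lean document; each statement's English description precedes it below -/
import Mathlib

section
/- For any real numbers a, b, α, β, if both (a+α)+(b+β) mod-1 representatives and (a+β)+(b+α) mod-1 representatives (i.e., the sums of fractional parts frac(a+α)+frac(b+β) and frac(a+β)+frac(b+α)) lie in the interval [1/2, 3/2), then frac(a+α)+frac(b+β) = frac(a+β)+frac(b+α). -/
theorem Int.fract_modEq_self {R : Type*} [Ring R] [LinearOrder R] [FloorRing R] (x : R) :
    Int.fract x ≡ x [PMOD 1] :=
  AddCommGroup.modEq_iff_zsmul'.2 ⟨⌊x⌋, by rw [Int.self_sub_fract, zsmul_one]⟩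

theorem AddCommGroup.ModEq.eq_of_mem_Ico {α : Type*} [AddCommGroup α] [LinearOrder α]
    [IsOrderedAddMonoid α] [Archimedean α] {p a b c : α} (hp : 0 < p) (h : a ≡ b [PMOD p])
    (ha : a ∈ Set.Ico c (c + p)) (hb : b ∈ Set.Ico c (c + p)) : a = b := by
  rw [← toIcoMod_eq_self hp] at ha hb
  rw [← ha, ← hb]
  exact (toIcoMod_inj hp).2 h

theorem psi_swap_invariant (a b α β : ℝ)
    (h1 : Int.fract (a + α) + Int.fract (b + β) ∈ Set.Ico (1/2 : ℝ) (3/2))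
    (h2 : Int.fract (a + β) + Int.fract (b + α) ∈ Set.Ico (1/2 : ℝ) (3/2)) :
    Int.fract (a + α) + Int.fract (b + β) = Int.fract (a + β) + Int.fract (b + α) := by
  have hmod : Int.fract (a + α) + Int.fract (b + β) ≡
      Int.fract (a + β) + Int.fract (b + α) [PMOD 1] :=
    calc Int.fract (a + α) + Int.fract (b + β)
        ≡ (a + α) + (b + β) [PMOD 1] := (Int.fract_modEq_self _).add (Int.fract_modEq_self _)
      _ = (a + β) + (b + α) := by ring
      _ ≡ Int.fract (a + β) + Int.fract (b + α) [PMOD 1] :=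
        ((Int.fract_modEq_self _).add (Int.fract_modEq_self _)).symm
  rw [show (3/2 : ℝ) = 1/2 + 1 by norm_num] at h1 h2
  exact hmod.eq_of_mem_Ico one_pos h1 h2
end

section
/- For any real numbers a, b, α: if frac(a+α)+frac(b) ∈ [1/2, 3/2) and frac(a)+frac(b+α) ∈ [1/2, 3/2), then φ(a+α, b) − φ(a, b) = φ(a, b) − φ(a, b+α), where φ(x,y) := frac(x) − frac(y). -/
/-!
Each of `fract (a + α) - fract a` and `fract (b + α) - fract b` equals `α` up to an integer,
so they differ by an integer. That integer is also the difference of the two sums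
`fract (a + α) + fract b` and `fract a + fract (b + α)`, which lie in a common half-open
interval of length one; hence it vanishes.
-/

namespace Int

variable {R : Type*} [CommRing R] [LinearOrder R] [IsStrictOrderedRing R] [FloorRing R]

theorem exists_fract_add_sub_fract_sub_eq_intCast (x y α : R) :
    ∃ k : ℤ, (fract (x + α) - fract x) - (fract (y + α) - fract y) = k := by
  obtain ⟨m, hm⟩ := fract_add x α
  obtain ⟨n, hn⟩ := fract_add y α
  exact ⟨m - n, by push_cast; linear_combination hm - hn⟩

theorem fract_add_sub_fract_eq_of_abs_lt_one {x y α : R}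
    (h : |(fract (x + α) + fract y) - (fract x + fract (y + α))| < 1) :
    fract (x + α) - fract x = fract (y + α) - fract y := by
  obtain ⟨k, hk⟩ := exists_fract_add_sub_fract_sub_eq_intCast x y α
  have hk_abs : |(k : R)| < 1 := by
    rw [← hk]; convert h using 2; ring
  have hk_zero : k = 0 := abs_lt_one_iff.mp (by exact_mod_cast hk_abs)
  rw [hk_zero, cast_zero] at hk
  exact sub_eq_zero.mp hk

theorem fract_add_sub_fract_eq_of_mem_Ico {x y α c : R}
    (hx : fract (x + α) + fract y ∈ Set.Ico c (c + 1))
    (hy : fract x + fract (y + α) ∈ Set.Ico c (c + 1)) :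
    fract (x + α) - fract x = fract (y + α) - fract y := by
  obtain ⟨hx₁, hx₂⟩ := hx
  obtain ⟨hy₁, hy₂⟩ := hy
  exact fract_add_sub_fract_eq_of_abs_lt_one <| abs_sub_lt_iff.mpr ⟨by linarith, by linarith⟩

end Int

theorem phi_three_term_ap (a b α : ℝ)
    (h1 : Int.fract (a + α) + Int.fract b ∈ Set.Ico (1/2 : ℝ) (3/2))
    (h2 : Int.fract a + Int.fract (b + α) ∈ Set.Ico (1/2 : ℝ) (3/2)) :
    (Int.fract (a + α) - Int.fract b) - (Int.fract a - Int.fract b)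
      = (Int.fract a - Int.fract b) - (Int.fract a - Int.fract (b + α)) := by
  have h32 : (3/2 : ℝ) = 1/2 + 1 := by norm_num
  rw [h32] at h1 h2
  have h_shift := Int.fract_add_sub_fract_eq_of_mem_Ico h1 h2
  linarith
end

section
/- For any real numbers a, b, α with frac(a+α)+frac(b) ∈ [1/2, 3/2) and frac(a)+frac(b+α) ∈ [1/2, 3/2), let Δ := frac(a+α) − frac(a). Then φ(a+α,b) − φ(a,b) = Δ, φ(a,b) − φ(a,b+α) = Δ, Δ ≡ α (mod 1), and the distance from α to the nearest integer satisfies ‖α‖_𝕋 ≤ |Δ|. -/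
theorem phi_common_difference (a b α : ℝ)
    (h1 : Int.fract (a + α) + Int.fract b ∈ Set.Ico (1/2 : ℝ) (3/2))
    (h2 : Int.fract a + Int.fract (b + α) ∈ Set.Ico (1/2 : ℝ) (3/2)) :
    (Int.fract (a + α) - Int.fract b) - (Int.fract a - Int.fract b)
        = Int.fract (a + α) - Int.fract a
    ∧ (Int.fract a - Int.fract b) - (Int.fract a - Int.fract (b + α))
        = Int.fract (a + α) - Int.fract a
    ∧ (∃ n : ℤ, Int.fract (a + α) - Int.fract a - α = n)
    ∧ ‖(α : AddCircle (1 : ℝ))‖ ≤ |Int.fract (a + α) - Int.fract a| := by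
  obtain ⟨h1l, h1r⟩ := h1
  obtain ⟨h2l, h2r⟩ := h2
  have hΔa : Int.fract (a + α) - Int.fract a - α = (⌊a⌋ - ⌊a + α⌋ : ℤ) := by
    rw [Int.fract, Int.fract]; push_cast; ring
  have hΔb : Int.fract (b + α) - Int.fract b - α = (⌊b⌋ - ⌊b + α⌋ : ℤ) := by
    rw [Int.fract, Int.fract]; push_cast; ring
  set k : ℤ := (⌊a⌋ - ⌊a + α⌋) - (⌊b⌋ - ⌊b + α⌋) with hk
  have hint : (Int.fract (a + α) - Int.fract a) - (Int.fract (b + α) - Int.fract b)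
      = (k : ℝ) := by
    push_cast [hk] at hΔa hΔb ⊢
    linarith
  have habs : |((k : ℝ))| < 1 := by
    rw [← hint, abs_lt]; constructor <;> linarith
  have hz : k = 0 := by
    have h : |k| < 1 := by exact_mod_cast habs
    rw [abs_lt] at h
    omega
  have heq : Int.fract (a + α) - Int.fract a = Int.fract (b + α) - Int.fract b := by
    rw [hz] at hint; push_cast at hint; linarith
  refine ⟨by ring, by linarith, ⟨⌊a⌋ - ⌊a + α⌋, hΔa⟩, ?_⟩
  have hmem : α - (Int.fract (a + α) - Int.fract a) ∈ AddSubgroup.zmultiples (1 : ℝ) :=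
    ⟨⌊a + α⌋ - ⌊a⌋, by push_cast at hΔa ⊢; simp; linarith⟩
  have hcast : (α : AddCircle (1 : ℝ)) = ((Int.fract (a + α) - Int.fract a : ℝ) : AddCircle (1 : ℝ)) :=
    (QuotientAddGroup.eq_iff_sub_mem).mpr hmem
  rw [hcast]
  exact (QuotientAddGroup.norm_mk_le_norm).trans_eq (Real.norm_eq_abs _)
end

section
/- Fix D ≥ 1, reals r, δ > 0, and θ ∈ ℝ^D. Suppose x, y, d are integers with d ≠ 0 such that for each coordinate i ≤ D, all the quantities frac(xθᵢ+μᵢ)+frac(yθᵢ+νᵢ), frac((x+d)θᵢ+μᵢ)+frac(yθᵢ+νᵢ), and frac(xθᵢ+μᵢ)+frac((y+d)θᵢ+νᵢ) lie in [1/2,3/2) (for some fixed shifts μ, ν ∈ ℝ^D), and such that the vectors Φ(x,y), Φ(x+d,y), Φ(x,y+d) ∈ ℝ^D all have Euclidean norm in [r−δ, r), where Φ(u,v)ᵢ := frac(uθᵢ+μᵢ) − frac(vθᵢ+νᵢ). Then Σ_{i=1}^D ‖dθᵢ‖_𝕋² ≤ 2rδ. -/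
lemma addCircle_norm_le_of_int_sub (c e : ℝ) (m : ℤ) (h : c = e + m) :
    ‖((c : ℝ) : AddCircle (1 : ℝ))‖ ≤ |e| := by
  have h0 : ((c : ℝ) : AddCircle (1 : ℝ)) = ((e : ℝ) : AddCircle (1 : ℝ)) := by
    have hm : ((m : ℝ) : AddCircle (1 : ℝ)) = 0 := by
      rw [AddCircle.coe_eq_zero_iff]
      exact ⟨m, by simp⟩
    rw [h, AddCircle.coe_add, hm, add_zero]
  rw [h0]
  simpa using QuotientAddGroup.norm_mk_le_norm (S := AddSubgroup.zmultiples (1 : ℝ)) (m := e)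

theorem corner_forces_small_multiples {D : ℕ} (hD : 1 ≤ D) (r δ : ℝ)
    (hr : 0 < r) (hδ : 0 < δ) (θ μ ν : Fin D → ℝ) (x y d : ℤ) (hd : d ≠ 0)
    (Φ : ℤ → ℤ → Fin D → ℝ)
    (hΦ : ∀ u v i, Φ u v i = Int.fract (u * θ i + μ i) - Int.fract (v * θ i + ν i))
    (hS : ∀ i : Fin D,
      Int.fract (x * θ i + μ i) + Int.fract (y * θ i + ν i) ∈ Set.Ico (1/2 : ℝ) (3/2) ∧
      Int.fract ((x + d) * θ i + μ i) + Int.fract (y * θ i + ν i) ∈ Set.Ico (1/2 : ℝ) (3/2) ∧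
      Int.fract (x * θ i + μ i) + Int.fract ((y + d) * θ i + ν i) ∈ Set.Ico (1/2 : ℝ) (3/2))
    (hA1 : Real.sqrt (∑ i, Φ x y i ^ 2) ∈ Set.Ico (r - δ) r)
    (hA2 : Real.sqrt (∑ i, Φ (x + d) y i ^ 2) ∈ Set.Ico (r - δ) r)
    (hA3 : Real.sqrt (∑ i, Φ x (y + d) i ^ 2) ∈ Set.Ico (r - δ) r) :
    ∑ i, ‖((d * θ i : ℝ) : AddCircle (1 : ℝ))‖ ^ 2 ≤ 2 * r * δ := by
  set ε : Fin D → ℝ := fun i =>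
    Int.fract ((x + d) * θ i + μ i) - Int.fract (x * θ i + μ i) with hε
  set η : Fin D → ℝ := fun i =>
    Int.fract ((y + d) * θ i + ν i) - Int.fract (y * θ i + ν i) with hη
  have key1 : ∀ i, ∃ m : ℤ, (d : ℝ) * θ i = ε i + m := by
    intro i
    refine ⟨⌊((x + d : ℤ) : ℝ) * θ i + μ i⌋ - ⌊((x : ℤ) : ℝ) * θ i + μ i⌋, ?_⟩
    simp only [hε, Int.fract]
    push_cast
    ring
  have key2 : ∀ i, ∃ m : ℤ, (d : ℝ) * θ i = η i + m := by
    intro i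
    refine ⟨⌊((y + d : ℤ) : ℝ) * θ i + ν i⌋ - ⌊((y : ℤ) : ℝ) * θ i + ν i⌋, ?_⟩
    simp only [hη, Int.fract]
    push_cast
    ring
  have hεη : ∀ i, ε i = η i := by
    intro i
    obtain ⟨m1, h1⟩ := key1 i
    obtain ⟨m2, h2⟩ := key2 i
    have hint : ε i - η i = ((m2 - m1 : ℤ) : ℝ) := by push_cast; linarith
    obtain ⟨hs1, hs2, hs3⟩ := hS i
    simp only [Set.mem_Ico] at hs1 hs2 hs3
    have habs : |ε i - η i| < 1 := by
      rw [abs_lt]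
      constructor <;> simp only [hε, hη] <;>
        linarith [hs1.1, hs1.2, hs2.1, hs2.2, hs3.1, hs3.2]
    rw [hint] at habs
    have hm : m2 - m1 = 0 := by
      have h9 : |m2 - m1| < 1 := by exact_mod_cast habs
      have h10 := abs_lt.mp h9
      omega
    have : (m2 : ℝ) = m1 := by exact_mod_cast sub_eq_zero.mp hm
    linarith
  -- geometric relations
  have hv : ∀ i, Φ (x + d) y i = Φ x y i + ε i := by
    intro i; simp only [hΦ, hε]; push_cast; ring
  have hw : ∀ i, Φ x (y + d) i = Φ x y i - ε i := by
    intro i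
    have := hεη i
    simp only [hε, hη] at this
    simp only [hΦ, hε]
    push_cast at this ⊢
    linarith
  -- sum bounds
  have hsum_nonneg : ∀ (f : Fin D → ℝ), (0:ℝ) ≤ ∑ i, f i ^ 2 := fun f =>
    Finset.sum_nonneg fun i _ => sq_nonneg _
  have hv2 : ∑ i, Φ (x + d) y i ^ 2 < r ^ 2 := by
    nlinarith [Real.sq_sqrt (hsum_nonneg (Φ (x + d) y)), hsum_nonneg (Φ (x + d) y), hA2.2,
      Real.sqrt_nonneg (∑ i, Φ (x + d) y i ^ 2)]
  have hw2 : ∑ i, Φ x (y + d) i ^ 2 < r ^ 2 := by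
    nlinarith [Real.sq_sqrt (hsum_nonneg (Φ x (y + d))), hA3.2,
      Real.sqrt_nonneg (∑ i, Φ x (y + d) i ^ 2)]
  have hpar : ∑ i, Φ (x + d) y i ^ 2 + ∑ i, Φ x (y + d) i ^ 2
      = 2 * ∑ i, Φ x y i ^ 2 + 2 * ∑ i, ε i ^ 2 := by
    rw [← Finset.sum_add_distrib, Finset.mul_sum, Finset.mul_sum, ← Finset.sum_add_distrib]
    apply Finset.sum_congr rfl
    intro i _
    rw [hv i, hw i]
    ring
  have hε_bound : ∑ i, ε i ^ 2 ≤ 2 * r * δ := by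
    rcases le_or_gt δ r with hcase | hcase
    · have hu2 : (r - δ) ^ 2 ≤ ∑ i, Φ x y i ^ 2 := by
        have h1 := hA1.1
        have := Real.sq_sqrt (hsum_nonneg (Φ x y))
        nlinarith [Real.sqrt_nonneg (∑ i, Φ x y i ^ 2)]
      nlinarith
    · nlinarith [hsum_nonneg (Φ x y), hsum_nonneg ε]
  calc ∑ i, ‖((d * θ i : ℝ) : AddCircle (1 : ℝ))‖ ^ 2 ≤ ∑ i, ε i ^ 2 := by
        apply Finset.sum_le_sum
        intro i _
        obtain ⟨m, hm⟩ := key1 i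
        have := addCircle_norm_le_of_int_sub ((d : ℝ) * θ i) (ε i) m hm
        have hnn : (0:ℝ) ≤ ‖(((d : ℝ) * θ i : ℝ) : AddCircle (1 : ℝ))‖ := norm_nonneg _
        calc ‖(((d : ℝ) * θ i : ℝ) : AddCircle (1 : ℝ))‖ ^ 2 ≤ |ε i| ^ 2 := by
              exact pow_le_pow_left₀ hnn this 2
          _ = ε i ^ 2 := sq_abs _
    _ ≤ 2 * r * δ := hε_bound
end

section
/- Fix N, D ≥ 1, reals r, δ > 0, and θ ∈ 𝕋^D such that Σ_{i=1}^D ‖dθᵢ‖_𝕋² > 2rδ for every integer d with 1 ≤ |d| ≤ N. Then for every μ ∈ (𝕋²)^D, the set A = {(x,y) ∈ [N]² : f_{θ,μ}(x,y) ∈ S_{r,δ;D}} is corner-free, where f_{θ,μ}(x,y) = ((xθ₁,yθ₁)+μ₁, …, (xθ_D,yθ_D)+μ_D) ∈ (𝕋²)^D. -/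
/-!
Let `aᵢ, a'ᵢ` be the first torus coordinates at `x, x + d` and `bᵢ, b'ᵢ` the second ones at
`y, y + d`. Along a corner the increments `a'ᵢ - aᵢ` and `b'ᵢ - bᵢ` agree: both are `dθᵢ`
modulo `1`, and their difference `(a'ᵢ + bᵢ) - (aᵢ + b'ᵢ)` lies in `(-1, 1)`. Hence
`φ(x + d, y) = u + ε` and `φ(x, y + d) = u - ε` with `u = φ(x, y)`, and the parallelogram law
squeezes `‖ε‖²` below `r² - ‖u‖² ≤ 2rδ`, while `‖ε‖² ≥ Σᵢ ‖dθᵢ‖²_𝕋`.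
-/

/-- `(x,y)` lands in `S_{r,δ;D}` under the affine map `f_{θ,μ,ν}`, expressed via the
fractional-part representatives in `[0,1)²` of points of the 2-torus. -/
def inSrd (D : ℕ) (r δ : ℝ) (θ : Fin D → ℝ) (μ ν : Fin D → ℝ) (x y : ℤ) : Prop :=
  (∀ i : Fin D,
      Int.fract (x * θ i + μ i) + Int.fract (y * θ i + ν i) ∈ Set.Ico (1/2 : ℝ) (3/2)) ∧
  Real.sqrt (∑ i, (Int.fract (x * θ i + μ i) - Int.fract (y * θ i + ν i)) ^ 2)
    ∈ Set.Ico (r - δ) r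

open Int Set

theorem Int.fract_add_sub_fract (s α : ℝ) :
    fract (s + α) - fract s = α - ((⌊s + α⌋ - ⌊s⌋ : ℤ) : ℝ) := by
  simp only [Int.fract, Int.cast_sub]
  ring

theorem fract_add_sub_fract_eq {s t α : ℝ}
    (h₁ : fract (s + α) + fract t ∈ Ico (1 / 2 : ℝ) (3 / 2))
    (h₂ : fract s + fract (t + α) ∈ Ico (1 / 2 : ℝ) (3 / 2)) :
    fract (s + α) - fract s = fract (t + α) - fract t := by
  have hclose : |(fract (s + α) - fract s) - (fract (t + α) - fract t)| < 1 := by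
    rw [abs_lt]; constructor <;> linarith [h₁.1, h₁.2, h₂.1, h₂.2]
  rw [Int.fract_add_sub_fract, Int.fract_add_sub_fract] at hclose ⊢
  rw [sub_sub_sub_cancel_left, ← Int.cast_sub, ← Int.cast_abs, ← Int.cast_one, Int.cast_lt,
    Int.abs_lt_one_iff, sub_eq_zero] at hclose
  rw [hclose]

theorem AddCircle.norm_coe_le_abs_sub_intCast (α : ℝ) (k : ℤ) :
    ‖(α : AddCircle (1 : ℝ))‖ ≤ |α - k| := by
  simpa [AddCircle.norm_eq] using round_le α k

theorem AddCircle.norm_coe_le_abs_fract_add_sub_fract (s α : ℝ) :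
    ‖(α : AddCircle (1 : ℝ))‖ ≤ |fract (s + α) - fract s| := by
  rw [Int.fract_add_sub_fract]
  exact AddCircle.norm_coe_le_abs_sub_intCast α _

theorem sq_norm_lt_of_norm_add_lt_of_norm_sub_lt {E : Type*} [NormedAddCommGroup E]
    [InnerProductSpace ℝ E] {r δ : ℝ} {u e : E} (hu : ‖u‖ ∈ Ico (r - δ) r)
    (hadd : ‖u + e‖ < r) (hsub : ‖u - e‖ < r) : ‖e‖ ^ 2 < 2 * r * δ := by
  have hpar := parallelogram_law_with_norm ℝ u e
  have hadd' := pow_lt_pow_left₀ hadd (norm_nonneg _) two_ne_zero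
  have hsub' := pow_lt_pow_left₀ hsub (norm_nonneg _) two_ne_zero
  have hshell : r ^ 2 - ‖u‖ ^ 2 ≤ 2 * r * δ := by nlinarith [hu.1, hu.2, norm_nonneg u]
  linarith

/-- `φ(f_{θ,μ,ν}(x, y))` in the paper's notation. -/
noncomputable def phiVec {D : ℕ} (θ μ ν : Fin D → ℝ) (x y : ℤ) : EuclideanSpace ℝ (Fin D) :=
  WithLp.toLp 2 fun i => fract (x * θ i + μ i) - fract (y * θ i + ν i)

theorem norm_phiVec_mem_Ico {D : ℕ} {r δ : ℝ} {θ μ ν : Fin D → ℝ} {x y : ℤ}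
    (h : inSrd D r δ θ μ ν x y) : ‖phiVec θ μ ν x y‖ ∈ Ico (r - δ) r := by
  simpa [phiVec, EuclideanSpace.norm_eq] using h.2

theorem sum_norm_sq_lt_of_corner {D : ℕ} {r δ : ℝ} {θ μ ν : Fin D → ℝ} {x y d : ℤ}
    (h₀ : inSrd D r δ θ μ ν x y) (h₁ : inSrd D r δ θ μ ν (x + d) y)
    (h₂ : inSrd D r δ θ μ ν x (y + d)) :
    ∑ i, ‖((d * θ i : ℝ) : AddCircle (1 : ℝ))‖ ^ 2 < 2 * r * δ := by
  have shift (z : ℤ) (c : ℝ) (i : Fin D) :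
      ((z + d : ℤ) : ℝ) * θ i + c = (z * θ i + c) + d * θ i := by
    push_cast; ring
  set ε : EuclideanSpace ℝ (Fin D) :=
    WithLp.toLp 2 fun i => fract ((x * θ i + μ i) + d * θ i) - fract (x * θ i + μ i)
  have hadd : phiVec θ μ ν (x + d) y = phiVec θ μ ν x y + ε := by
    ext i
    simp only [phiVec, ε, shift, PiLp.add_apply]
    ring
  have hsub : phiVec θ μ ν x (y + d) = phiVec θ μ ν x y - ε := by
    ext i
    have hinc := fract_add_sub_fract_eq (by simpa only [shift] using h₁.1 i)
      (by simpa only [shift] using h₂.1 i)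
    simp only [phiVec, ε, shift, PiLp.sub_apply]
    linarith
  calc ∑ i, ‖((d * θ i : ℝ) : AddCircle (1 : ℝ))‖ ^ 2 ≤ ‖ε‖ ^ 2 := by
        rw [EuclideanSpace.real_norm_sq_eq]
        refine Finset.sum_le_sum fun i _ => ?_
        rw [← sq_abs (ε i)]
        exact pow_le_pow_left₀ (norm_nonneg _)
          (AddCircle.norm_coe_le_abs_fract_add_sub_fract _ _) 2
    _ < 2 * r * δ := sq_norm_lt_of_norm_add_lt_of_norm_sub_lt (norm_phiVec_mem_Ico h₀)
        (hadd ▸ (norm_phiVec_mem_Ico h₁).2) (hsub ▸ (norm_phiVec_mem_Ico h₂).2)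

theorem construction_corner_free_general (N D : ℕ)
    (r δ : ℝ) (θ : Fin D → ℝ)
    (hθ : ∀ d : ℤ, d ≠ 0 → |d| ≤ (N : ℤ) →
      2 * r * δ < ∑ i, ‖((d * θ i : ℝ) : AddCircle (1 : ℝ))‖ ^ 2)
    (μ ν : Fin D → ℝ) :
    ¬ ∃ x y d : ℤ, d ≠ 0 ∧
      ((x, y) ∈ Set.Icc (1 : ℤ) N ×ˢ Set.Icc (1 : ℤ) N ∧ inSrd D r δ θ μ ν x y) ∧
      ((x + d, y) ∈ Set.Icc (1 : ℤ) N ×ˢ Set.Icc (1 : ℤ) N ∧ inSrd D r δ θ μ ν (x + d) y) ∧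
      ((x, y + d) ∈ Set.Icc (1 : ℤ) N ×ˢ Set.Icc (1 : ℤ) N ∧ inSrd D r δ θ μ ν x (y + d)) := by
  rintro ⟨x, y, d, hd, ⟨⟨⟨hx₁, hxN⟩, -⟩, h₀⟩, ⟨⟨⟨hxd₁, hxdN⟩, -⟩, h₁⟩, -, h₂⟩
  have hdN : |d| ≤ (N : ℤ) := abs_le.mpr ⟨by omega, by omega⟩
  exact (hθ d hd hdN).not_gt (sum_norm_sq_lt_of_corner h₀ h₁ h₂)

theorem construction_corner_free (N D : ℕ) (hN : 1 ≤ N) (hD : 1 ≤ D)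
    (r δ : ℝ) (hr : 0 < r) (hδ : 0 < δ) (θ : Fin D → ℝ)
    (hθ : ∀ d : ℤ, d ≠ 0 → |d| ≤ (N : ℤ) →
      2 * r * δ < ∑ i, ‖((d * θ i : ℝ) : AddCircle (1 : ℝ))‖ ^ 2)
    (μ ν : Fin D → ℝ) :
    ¬ ∃ x y d : ℤ, d ≠ 0 ∧
      ((x, y) ∈ Set.Icc (1 : ℤ) N ×ˢ Set.Icc (1 : ℤ) N ∧ inSrd D r δ θ μ ν x y) ∧
      ((x + d, y) ∈ Set.Icc (1 : ℤ) N ×ˢ Set.Icc (1 : ℤ) N ∧ inSrd D r δ θ μ ν (x + d) y) ∧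
      ((x, y + d) ∈ Set.Icc (1 : ℤ) N ×ˢ Set.Icc (1 : ℤ) N ∧ inSrd D r δ θ μ ν x (y + d)) :=
  construction_corner_free_general N D r δ θ hθ μ ν
end

section
/- Let a, b ∈ [0,1) with a + b ∈ [1/2, 3/2), and suppose α ∈ ℝ satisfies frac(a+α)+b ∈ [1/2,3/2) and a+frac(b+α) ∈ [1/2,3/2). Then the three real numbers (a − frac(b+α)), (a − b), (frac(a+α) − b) form a three-term arithmetic progression in ℝ, with common difference Δ = frac(a+α) − a satisfying |Δ| ≥ ‖α‖_𝕋 and Δ ≡ α (mod 1). -/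
theorem strip_gives_three_AP (a b α : ℝ)
    (ha : a ∈ Set.Ico (0:ℝ) 1) (hb : b ∈ Set.Ico (0:ℝ) 1)
    (hab : a + b ∈ Set.Ico (1/2 : ℝ) (3/2))
    (h1 : Int.fract (a + α) + b ∈ Set.Ico (1/2 : ℝ) (3/2))
    (h2 : a + Int.fract (b + α) ∈ Set.Ico (1/2 : ℝ) (3/2)) :
    (a - b) - (a - Int.fract (b + α)) = Int.fract (a + α) - a
    ∧ (Int.fract (a + α) - b) - (a - b) = Int.fract (a + α) - a
    ∧ ‖(α : AddCircle (1 : ℝ))‖ ≤ |Int.fract (a + α) - a|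
    ∧ ∃ n : ℤ, Int.fract (a + α) - a - α = n := by
  set m : ℤ := ⌊a + α⌋ with hm
  set n : ℤ := ⌊b + α⌋ with hn
  have hfa : Int.fract (a + α) = a + α - m := Int.self_sub_floor (a + α) ▸ rfl
  have hfb : Int.fract (b + α) = b + α - n := Int.self_sub_floor (b + α) ▸ rfl
  have hmn : m = n := by
    have h1' : a + b + α - m ∈ Set.Ico (1/2 : ℝ) (3/2) := by
      have := h1; rw [hfa] at this
      constructor <;> [linarith [this.1]; linarith [this.2]]
    have h2' : a + b + α - n ∈ Set.Ico (1/2 : ℝ) (3/2) := by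
      have := h2; rw [hfb] at this
      constructor <;> [linarith [this.1]; linarith [this.2]]
    obtain ⟨p1, p2⟩ := h1'
    obtain ⟨q1, q2⟩ := h2'
    have hlt : |(m : ℝ) - n| < 1 := by
      rw [abs_sub_lt_iff]; constructor <;> linarith
    have : ((m - n : ℤ) : ℝ) = (m : ℝ) - n := by push_cast; ring
    have h2 : |((m - n : ℤ) : ℝ)| < 1 := by rw [this]; exact hlt
    have : |m - n| < 1 := by exact_mod_cast h2
    rw [abs_lt] at this
    omega
  refine ⟨?_, by ring, ?_, ⟨-m, by rw [hfa]; push_cast; ring⟩⟩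
  · rw [hfa, hfb, hmn]; ring
  · have key : ((α : ℝ) : AddCircle (1 : ℝ)) = ((α - m : ℝ) : AddCircle (1 : ℝ)) := by
      have hz : ((m : ℝ) : AddCircle (1 : ℝ)) = 0 := by
        rw [AddCircle.coe_eq_zero_iff]
        exact ⟨m, by simp⟩
      rw [← sub_eq_zero, ← QuotientAddGroup.mk_sub]
      convert hz using 2
      ring
    rw [key, hfa]
    have : ‖((α - m : ℝ) : AddCircle (1 : ℝ))‖ ≤ ‖(α - m : ℝ)‖ :=
      QuotientAddGroup.norm_mk_le_norm
    calc ‖((α - m : ℝ) : AddCircle (1 : ℝ))‖ ≤ |α - m| := this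
      _ = |a + α - m - a| := by ring_nf
end

section
/- Suppose x₁, x₂, x₃ ∈ ℝ^D form a three-term arithmetic progression (x₂ − x₁ = x₃ − x₂ = w) and all three lie in the annulus {v : r − δ ≤ ‖v‖₂ < r} where 0 < δ ≤ r. Then necessarily ‖w‖₂ ≤ √(2rδ). In particular, the annulus of radii [r−δ, r) contains no 3-AP with step of Euclidean length exceeding √(2rδ). -/
theorem annulus_no_long_AP {D : ℕ} (x₁ x₂ x₃ w : EuclideanSpace ℝ (Fin D))
    (r δ : ℝ) (hδ : 0 < δ) (hδr : δ ≤ r)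
    (h12 : x₂ - x₁ = w) (h23 : x₃ - x₂ = w)
    (h1 : ‖x₁‖ ∈ Set.Ico (r - δ) r)
    (h2 : ‖x₂‖ ∈ Set.Ico (r - δ) r)
    (h3 : ‖x₃‖ ∈ Set.Ico (r - δ) r) :
    ‖w‖ ≤ Real.sqrt (2 * r * δ) := by
  have hx3 : x₃ = x₂ + w := by rw [← h23]; abel
  have hx1 : x₁ = x₂ - w := by rw [← h12]; abel
  have hpar := parallelogram_law_with_norm ℝ x₂ w
  rw [← hx3, ← hx1] at hpar
  have hr : 0 < r := lt_of_lt_of_le hδ hδr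
  have h2l : r - δ ≤ ‖x₂‖ := h2.1
  have h2sq : (r - δ)^2 ≤ ‖x₂‖^2 := by
    apply sq_le_sq' <;> nlinarith [norm_nonneg x₂]
  have h1sq : ‖x₁‖^2 < r^2 := by nlinarith [norm_nonneg x₁, h1.2]
  have h3sq : ‖x₃‖^2 < r^2 := by nlinarith [norm_nonneg x₃, h3.2]
  have hw : ‖w‖^2 ≤ 2 * r * δ := by nlinarith
  calc ‖w‖ = Real.sqrt (‖w‖^2) := (Real.sqrt_sq (norm_nonneg w)).symm
    _ ≤ Real.sqrt (2 * r * δ) := Real.sqrt_le_sqrt hw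
end
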